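/- arXiv:2208.07278 — 2 statements merged into one kernel-verified Lean document; each statement's English description precedes it below -/
import Mathlib

section
/- For every 1 ≤ j ≤ m, the right action Φ_j^𝔓 of ∏_{l=1}^j B_{GL(n_l+1)} on ∏_{l=1}^j GL(n_l+1) given by Φ_j^𝔓((g_1,…,g_j),(b_1,…,b_j)) = (g_1b_1, (Ψ_1^{(2)}(b_1))^{-1}g_2b_2, …, (Ψ_1^{(j)}(b_1))^{-1}(Ψ_2^{(j)}(b_2))^{-1}⋯(Ψ_{j-1}^{(j)}(b_{j-1}))^{-1}g_jb_j) is a free and proper group action. -/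
noncomputable section

open Matrix Finset

/-- `GL(d, ℂ)` realized as the unit group of the matrix ring. -/
abbrev GLC (d : ℕ) : Type := (Matrix (Fin d) (Fin d) ℂ)ˣ

/-- Upper triangular (BorelT) condition on an invertible matrix. -/
def IsUpper {d : ℕ} (g : GLC d) : Prop :=
  Matrix.BlockTriangular (g : Matrix (Fin d) (Fin d) ℂ) id

/-- The BorelT subgroup `B_{GL(d)}` of upper triangular invertible matrices. -/
abbrev BorelT (d : ℕ) : Type := {g : GLC d // IsUpper g}

lemma BorelT.diag_ne_zero {d : ℕ} (b : BorelT d) (i : Fin d) :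
    ((b : GLC d) : Matrix (Fin d) (Fin d) ℂ) i i ≠ 0 := by
  have hdet : ((b : GLC d) : Matrix (Fin d) (Fin d) ℂ).det =
      ∏ j, ((b : GLC d) : Matrix (Fin d) (Fin d) ℂ) j j :=
    Matrix.det_of_upperTriangular b.2
  have hu : IsUnit ((b : GLC d) : Matrix (Fin d) (Fin d) ℂ).det :=
    (Matrix.isUnit_iff_isUnit_det _).1 (b : GLC d).isUnit
  intro h
  rw [hdet] at hu
  have hz : (∏ j, ((b : GLC d) : Matrix (Fin d) (Fin d) ℂ) j j) = 0 :=
    Finset.prod_eq_zero (Finset.mem_univ i) h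
  rw [hz] at hu
  exact hu.ne_zero rfl

/-- `Γ_l(b)^a`: the character of the diagonal torus with exponent vector `a : ℤ^d`,
evaluated on the diagonal part of `b`. -/
def charPow {d : ℕ} (b : BorelT d) (a : Fin d → ℤ) : ℂ :=
  ∏ i, (((b : GLC d) : Matrix (Fin d) (Fin d) ℂ) i i) ^ (a i)

lemma charPow_ne_zero {d : ℕ} (b : BorelT d) (a : Fin d → ℤ) : charPow b a ≠ 0 :=
  Finset.prod_ne_zero_iff.2 fun i _ => zpow_ne_zero _ (BorelT.diag_ne_zero b i)

/-- The invertible diagonal matrix with prescribed nonvanishing diagonal entries. -/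
def diagGL {d : ℕ} (v : Fin d → ℂ) (hv : ∀ i, v i ≠ 0) : GLC d where
  val := Matrix.diagonal v
  inv := Matrix.diagonal fun i => (v i)⁻¹
  val_inv := by
    rw [Matrix.diagonal_mul_diagonal]
    have : (fun i => v i * (v i)⁻¹) = fun _ => (1 : ℂ) :=
      funext fun i => mul_inv_cancel₀ (hv i)
    rw [this, Matrix.diagonal_one]
  inv_val := by
    rw [Matrix.diagonal_mul_diagonal]
    have : (fun i => (v i)⁻¹ * v i) = fun _ => (1 : ℂ) :=
      funext fun i => inv_mul_cancel₀ (hv i)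
    rw [this, Matrix.diagonal_one]

variable {m : ℕ}

/-- The twisting matrix `Ψ_1^{(j)}(b_1)⋯Ψ_{j-1}^{(j)}(b_{j-1})`: the invertible
diagonal matrix whose `k`-th entry is `∏_{l<j} Γ_l(b_l)^{(k-th row of P_l^{(j)})}`. -/
def twist (n : Fin m → ℕ)
    (P : ∀ l j : Fin m, l < j → Matrix (Fin (n j + 1)) (Fin (n l + 1)) ℤ)
    (b : ∀ l, BorelT (n l + 1)) (j : Fin m) : GLC (n j + 1) :=
  diagGL (fun k => ∏ l : {l : Fin m // l < j}, charPow (b l.1) (fun i => P l.1 j l.2 k i))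
    (fun _ => Finset.prod_ne_zero_iff.2 fun l _ => charPow_ne_zero _ _)

/-- The right action `Φ^𝔓` of `∏_l B_{GL(n_l+1)}` on `∏_l GL(n_l+1)`:
`(g_1,…,g_m)·(b_1,…,b_m) = (…, (Ψ_1^{(j)}(b_1))⁻¹⋯(Ψ_{j-1}^{(j)}(b_{j-1}))⁻¹ g_j b_j, …)`. -/
def Phi (n : Fin m → ℕ)
    (P : ∀ l j : Fin m, l < j → Matrix (Fin (n j + 1)) (Fin (n l + 1)) ℤ)
    (g : ∀ l, GLC (n l + 1)) (b : ∀ l, BorelT (n l + 1)) : ∀ l, GLC (n l + 1) :=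
  fun j => (twist n P b j)⁻¹ * g j * (b j : GLC (n j + 1))

/-- Orbit relation of the right action `Φ^𝔓`. -/
def PhiRel (n : Fin m → ℕ)
    (P : ∀ l j : Fin m, l < j → Matrix (Fin (n j + 1)) (Fin (n l + 1)) ℤ)
    (g g' : ∀ l, GLC (n l + 1)) : Prop :=
  ∃ b : ∀ l, BorelT (n l + 1), Phi n P g b = g'


/-! ### Auxiliary lemmas -/

lemma fin_strong_induction {j : ℕ} {S : Fin j → Prop}
    (step : ∀ l, (∀ l', l' < l → S l') → S l) : ∀ l, S l := by
  have H : ∀ N : ℕ, ∀ l : Fin j, (l : ℕ) < N → S l := by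
    intro N
    induction N with
    | zero => intro l hl; omega
    | succ N ih =>
      intro l hl
      exact step l fun l' hl' =>
        ih l' (lt_of_lt_of_le (Fin.lt_def.mp hl') (Nat.lt_succ_iff.mp hl))
  exact fun l => H ((l : ℕ) + 1) l (Nat.lt_succ_self _)

lemma isUpper_one {d : ℕ} : IsUpper (1 : GLC d) := by
  show Matrix.BlockTriangular ((1 : GLC d) : Matrix (Fin d) (Fin d) ℂ) id
  rw [Units.val_one]
  exact Matrix.blockTriangular_one

/-- Default element of the Borel subgroup. -/
def borelOne (d : ℕ) : BorelT d := ⟨1, isUpper_one⟩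

lemma continuous_borel_entry {d : ℕ} (i k : Fin d) :
    Continuous fun b : BorelT d => ((b : GLC d) : Matrix (Fin d) (Fin d) ℂ) i k :=
  (Units.continuous_val.comp continuous_subtype_val).matrix_elem i k

lemma continuous_charPow {d : ℕ} (a : Fin d → ℤ) :
    Continuous fun b : BorelT d => charPow b a := by
  unfold charPow
  refine continuous_finset_prod _ fun i _ => ?_
  refine continuous_iff_continuousAt.2 fun b => ?_
  exact ContinuousAt.comp (g := fun z : ℂ => z ^ a i)
    (continuousAt_zpow₀ _ _ (Or.inl (BorelT.diag_ne_zero b i)))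
    (continuous_borel_entry i i).continuousAt

/-- The twist as a function of only the coordinates below `j`. -/
def twistAux {m : ℕ} (n : Fin m → ℕ)
    (P : ∀ l j : Fin m, l < j → Matrix (Fin (n j + 1)) (Fin (n l + 1)) ℤ)
    (j : Fin m) (t : ∀ l : {l : Fin m // l < j}, BorelT (n l.1 + 1)) : GLC (n j + 1) :=
  diagGL (fun k => ∏ l : {l : Fin m // l < j}, charPow (t l) (fun i => P l.1 j l.2 k i))
    (fun _ => Finset.prod_ne_zero_iff.2 fun l _ => charPow_ne_zero _ _)

lemma twist_eq_twistAux {m : ℕ} (n : Fin m → ℕ)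
    (P : ∀ l j : Fin m, l < j → Matrix (Fin (n j + 1)) (Fin (n l + 1)) ℤ)
    (b : ∀ l, BorelT (n l + 1)) (j : Fin m) :
    twist n P b j = twistAux n P j (fun l => b l.1) := rfl

lemma continuous_twistAux_diag {m : ℕ} (n : Fin m → ℕ)
    (P : ∀ l j : Fin m, l < j → Matrix (Fin (n j + 1)) (Fin (n l + 1)) ℤ)
    (j : Fin m) (k : Fin (n j + 1)) :
    Continuous fun t : ∀ l : {l : Fin m // l < j}, BorelT (n l.1 + 1) =>
      ∏ l : {l : Fin m // l < j}, charPow (t l) (fun i => P l.1 j l.2 k i) :=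
  continuous_finset_prod _ fun l _ =>
    (continuous_charPow _).comp (continuous_apply l)

lemma continuous_twistAux {m : ℕ} (n : Fin m → ℕ)
    (P : ∀ l j : Fin m, l < j → Matrix (Fin (n j + 1)) (Fin (n l + 1)) ℤ)
    (j : Fin m) : Continuous (twistAux n P j) := by
  rw [Units.continuous_iff]
  constructor
  · refine continuous_matrix fun k k' => ?_
    show Continuous fun t => Matrix.diagonal _ k k'
    simp only [Matrix.diagonal_apply]
    by_cases h : k = k'
    · simpa [h] using continuous_twistAux_diag n P j k
    · simpa [h] using continuous_const
  · refine continuous_matrix fun k k' => ?_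
    show Continuous fun t => Matrix.diagonal _ k k'
    simp only [Matrix.diagonal_apply]
    by_cases h : k = k'
    · simp only [h, if_pos rfl]
      refine continuous_iff_continuousAt.2 fun t => ?_
      exact ContinuousAt.inv₀ (continuous_twistAux_diag n P j k').continuousAt
        (Finset.prod_ne_zero_iff.2 fun l _ => charPow_ne_zero _ _)
    · simpa [h] using continuous_const

lemma isClosed_isUpper (d : ℕ) : IsClosed {u : GLC d | IsUpper u} := by
  have heq : {u : GLC d | IsUpper u} =
      ⋂ p : Fin d × Fin d, ⋂ _ : p.2 < p.1,
        {u : GLC d | (u : Matrix (Fin d) (Fin d) ℂ) p.1 p.2 = 0} := by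
    ext u
    simp only [Set.mem_setOf_eq, Set.mem_iInter, IsUpper, Matrix.BlockTriangular, id]
    exact ⟨fun h p hp => h hp, fun h i k hik => h (i, k) hik⟩
  rw [heq]
  refine isClosed_iInter fun p => isClosed_iInter fun _ => ?_
  exact isClosed_eq (Units.continuous_val.matrix_elem p.1 p.2) continuous_const

lemma continuous_Phi {m : ℕ} (n : Fin m → ℕ)
    (P : ∀ l j : Fin m, l < j → Matrix (Fin (n j + 1)) (Fin (n l + 1)) ℤ) :
    Continuous fun p : (∀ l, GLC (n l + 1)) × (∀ l, BorelT (n l + 1)) =>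
      Phi n P p.1 p.2 := by
  refine continuous_pi fun l => ?_
  have h1 : Continuous fun p : (∀ l, GLC (n l + 1)) × (∀ l, BorelT (n l + 1)) =>
      twist n P p.2 l := by
    have : (fun p : (∀ l, GLC (n l + 1)) × (∀ l, BorelT (n l + 1)) => twist n P p.2 l)
        = (twistAux n P l) ∘ (fun p => fun l' : {l' : Fin m // l' < l} => p.2 l'.1) := rfl
    rw [this]
    exact (continuous_twistAux n P l).comp
      (continuous_pi fun l' => (continuous_apply l'.1).comp continuous_snd)
  exact (h1.inv.mul ((continuous_apply l).comp continuous_fst)).mul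
    (continuous_subtype_val.comp ((continuous_apply l).comp continuous_snd))

lemma phi_free {m : ℕ} (n : Fin m → ℕ)
    (P : ∀ l j : Fin m, l < j → Matrix (Fin (n j + 1)) (Fin (n l + 1)) ℤ)
    (g : ∀ l, GLC (n l + 1)) (b : ∀ l, BorelT (n l + 1))
    (hfix : Phi n P g b = g) : ∀ l, (b l : GLC (n l + 1)) = 1 := by
  refine fin_strong_induction fun l ih => ?_
  have htw : twist n P b l = 1 := by
    have hv : ∀ k, (∏ l' : {l' : Fin m // l' < l},
        charPow (b l'.1) fun i => P l'.1 l l'.2 k i) = 1 := by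
      intro k
      refine Finset.prod_eq_one fun l' _ => ?_
      refine Finset.prod_eq_one fun i _ => ?_
      rw [ih l'.1 l'.2, Units.val_one, Matrix.one_apply_eq, _root_.one_zpow]
    have hval : (twist n P b l).val = Matrix.diagonal (fun _ => (1 : ℂ)) := by
      show Matrix.diagonal _ = _
      exact congrArg Matrix.diagonal (funext hv)
    refine Units.ext ?_
    rw [hval, Units.val_one]
    exact Matrix.diagonal_one
  have he := congrFun hfix l
  rw [Phi, htw, inv_one, one_mul] at he
  exact mul_left_cancel (he.trans (mul_one (g l)).symm)

set_option maxHeartbeats 1000000 in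
lemma phi_proper {m : ℕ} (n : Fin m → ℕ)
    (P : ∀ l j : Fin m, l < j → Matrix (Fin (n j + 1)) (Fin (n l + 1)) ℤ) :
    IsProperMap (fun p : (∀ l, GLC (n l + 1)) × (∀ l, BorelT (n l + 1)) =>
      (Phi n P p.1 p.2, p.1)) := by
  rw [isProperMap_iff_ultrafilter]
  constructor
  · exact (continuous_Phi n P).prodMk continuous_fst
  · rintro 𝒰 ⟨h, glim⟩ hy
    have hPhi : Filter.Tendsto (fun p : (∀ l, GLC (n l + 1)) × (∀ l, BorelT (n l + 1)) =>
        Phi n P p.1 p.2) 𝒰 (nhds h) := (continuous_fst.tendsto _).comp hy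
    have hg : Filter.Tendsto (fun p : (∀ l, GLC (n l + 1)) × (∀ l, BorelT (n l + 1)) =>
        p.1) 𝒰 (nhds glim) := (continuous_snd.tendsto _).comp hy
    have key : ∀ l, ∃ β : BorelT (n l + 1),
        Filter.Tendsto (fun p : (∀ l, GLC (n l + 1)) × (∀ l, BorelT (n l + 1)) =>
          p.2 l) 𝒰 (nhds β) := by
      refine fin_strong_induction fun l ih => ?_
      choose βp hβp using ih
      set βt : ∀ l', BorelT (n l' + 1) :=
        fun l' => if hl : l' < l then βp l' hl else borelOne _ with hβt
      have htw : Filter.Tendsto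
          (fun p : (∀ l, GLC (n l + 1)) × (∀ l, BorelT (n l + 1)) => twist n P p.2 l)
          𝒰 (nhds (twistAux n P l (fun l' => βt l'.1))) := by
        have hcoord : Filter.Tendsto
            (fun p : (∀ l, GLC (n l + 1)) × (∀ l, BorelT (n l + 1)) =>
              fun l' : {l' : Fin m // l' < l} => p.2 l'.1) 𝒰
            (nhds (fun l' => βt l'.1)) := by
          refine tendsto_pi_nhds.2 fun l' => ?_
          have : βt l'.1 = βp l'.1 l'.2 := by simp [hβt, l'.2]
          rw [this]
          exact hβp l'.1 l'.2
        exact ((continuous_twistAux n P l).tendsto _).comp hcoord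
      set βl : GLC (n l + 1) := (glim l)⁻¹ * twistAux n P l (fun l' => βt l'.1) * h l with hβl
      have hbl : Filter.Tendsto
          (fun p : (∀ l, GLC (n l + 1)) × (∀ l, BorelT (n l + 1)) =>
            ((p.2 l : GLC (n l + 1)))) 𝒰 (nhds βl) := by
        have hval : ∀ p : (∀ l, GLC (n l + 1)) × (∀ l, BorelT (n l + 1)),
            ((p.2 l : GLC (n l + 1))) = (p.1 l)⁻¹ * twist n P p.2 l * Phi n P p.1 p.2 l := by
          intro p
          rw [Phi]
          group
        have hG : Filter.Tendsto
            (fun p : (∀ l, GLC (n l + 1)) × (∀ l, BorelT (n l + 1)) =>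
              (p.1 l)⁻¹ * twist n P p.2 l * Phi n P p.1 p.2 l) 𝒰 (nhds βl) :=
          (((tendsto_pi_nhds.1 hg l).inv.mul htw).mul (tendsto_pi_nhds.1 hPhi l))
        exact hG.congr fun p => (hval p).symm
      have hupper : IsUpper βl := by
        refine (isClosed_isUpper (n l + 1)).mem_of_tendsto hbl ?_
        exact Filter.Eventually.of_forall fun p => (p.2 l).2
      exact ⟨⟨βl, hupper⟩, tendsto_subtype_rng.2 hbl⟩
    choose β hβ using key
    have hxb : Filter.Tendsto (fun p : (∀ l, GLC (n l + 1)) × (∀ l, BorelT (n l + 1)) =>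
        p.2) 𝒰 (nhds β) := tendsto_pi_nhds.2 hβ
    have h2 : Filter.Tendsto (id : ((∀ l, GLC (n l + 1)) × (∀ l, BorelT (n l + 1))) → _)
        (𝒰 : Filter _) (nhds (glim, β)) := hg.prodMk_nhds hxb
    have hle : (𝒰 : Filter _) ≤ nhds (glim, β) := by
      have h3 := h2
      rw [Filter.tendsto_id'] at h3
      exact h3
    refine ⟨(glim, β), ?_, hle⟩
    have h1 : Filter.Tendsto (fun p : (∀ l, GLC (n l + 1)) × (∀ l, BorelT (n l + 1)) =>
        (Phi n P p.1 p.2, p.1)) 𝒰 (nhds (Phi n P glim β, glim)) :=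
      (((continuous_Phi n P).prodMk continuous_fst).tendsto (glim, β)).comp h2
    exact tendsto_nhds_unique h1 hy


/-- Lemma 2.2, "Φ_j^𝔓 is free and proper".
Fix positive integers `n_1,…,n_m` and integer matrices `𝔓 = (P_l^{(j)})_{l<j}`.
For every `1 ≤ j ≤ m`, the right action `Φ_j^𝔓` of `∏_{l=1}^j B_{GL(n_l+1)}` on
`∏_{l=1}^j GL(n_l+1)` is free, and proper in the sense of Bourbaki: the map
`(g,b) ↦ (Φ_j^𝔓(g,b), g)` is a proper map. -/
theorem flagBott_action_free_and_proper
    (m : ℕ) (n : Fin m → ℕ) (hn : ∀ l, 0 < n l)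
    (P : ∀ l j : Fin m, l < j → Matrix (Fin (n j + 1)) (Fin (n l + 1)) ℤ)
    (j : ℕ) (hj1 : 1 ≤ j) (hjm : j ≤ m) :
    (∀ (g : ∀ l : Fin j, GLC (n (Fin.castLE hjm l) + 1))
       (b : ∀ l : Fin j, BorelT (n (Fin.castLE hjm l) + 1)),
        Phi (fun l => n (Fin.castLE hjm l))
          (fun l i h => P (Fin.castLE hjm l) (Fin.castLE hjm i)
            h) g b = g →
        ∀ l, (b l : GLC (n (Fin.castLE hjm l) + 1)) = 1)
    ∧ IsProperMap
        (fun p : (∀ l : Fin j, GLC (n (Fin.castLE hjm l) + 1)) ×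
                 (∀ l : Fin j, BorelT (n (Fin.castLE hjm l) + 1)) =>
          (Phi (fun l => n (Fin.castLE hjm l))
            (fun l i h => P (Fin.castLE hjm l) (Fin.castLE hjm i)
              h) p.1 p.2, p.1)) := by
  exact ⟨phi_free _ _, phi_proper _ _⟩
end
end

section
/- Let B_•^{quo} = B_•^{quo}(𝔓) be the flag Bott tower determined by a sequence of matrices 𝔓 = (P_l^{(j)})_{1≤l<j≤m} ∈ ∏_{1≤l<j≤m} M_{n_j+1,n_l+1}(ℤ). Then for each 1 ≤ k ≤ n_j+1 the tautological quotient line bundle W_{j,k}/W_{j,k-1} → B_j^{quo} is isomorphic to the line bundle η(0,0,…,0,e_k) → B_j^{quo}, where e_k = (0,…,0,1,0,…,0) ∈ ℤ^{n_j+1} has 1 in the k-th place and all other entries zero. -/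
noncomputable section

open Matrix Finset

variable {m : ℕ}

/-- The `m`-stage flag Bott manifold `B_m^{quo}(𝔓) = ∏_l GL(n_l+1) / Φ^𝔓`,
with the quotient topology. -/
def FBSpace (n : Fin m → ℕ)
    (P : ∀ l j : Fin m, l < j → Matrix (Fin (n j + 1)) (Fin (n l + 1)) ℤ) : Type :=
  Quot (PhiRel n P)

instance (n : Fin m → ℕ) (P : ∀ l j : Fin m, l < j → Matrix (Fin (n j + 1)) (Fin (n l + 1)) ℤ) :
    TopologicalSpace (FBSpace n P) :=
  inferInstanceAs (TopologicalSpace (Quot _))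

/-- The line bundle `η(v_1,…,v_m)` over `B_m^{quo}`, with an arbitrary cocycle
`c : b ↦ b_1^{-v_1}⋯b_m^{-v_m}` prescribed abstractly: total space of the quotient of
`∏_l GL(n_l+1) × ℂ` by the action `(g,w)·b = (Φ(g,b), c(b)·w)`. -/
def EtaTotalC (n : Fin m → ℕ)
    (P : ∀ l j : Fin m, l < j → Matrix (Fin (n j + 1)) (Fin (n l + 1)) ℤ)
    (c : (∀ l, BorelT (n l + 1)) → ℂ) : Type :=
  Quot (fun p q : (∀ l, GLC (n l + 1)) × ℂ =>
    ∃ b : ∀ l, BorelT (n l + 1), Phi n P p.1 b = q.1 ∧ q.2 = c b * p.2)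

instance (n : Fin m → ℕ) (P : ∀ l j : Fin m, l < j → Matrix (Fin (n j + 1)) (Fin (n l + 1)) ℤ)
    (c : (∀ l, BorelT (n l + 1)) → ℂ) : TopologicalSpace (EtaTotalC n P c) :=
  inferInstanceAs (TopologicalSpace (Quot _))

/-- The cocycle `b ↦ b_1^{-v_1}⋯b_m^{-v_m}` of the line bundle `η(v_1,…,v_m)`. -/
def etaCocycle (n : Fin m → ℕ) (v : ∀ l : Fin m, Fin (n l + 1) → ℤ)
    (b : ∀ l, BorelT (n l + 1)) : ℂ :=
  ∏ l, charPow (b l) (fun i => -(v l i))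

/-- The total space of the line bundle `η(v_1,…,v_m)` over `B_m^{quo}`. -/
def EtaTotal (n : Fin m → ℕ)
    (P : ∀ l j : Fin m, l < j → Matrix (Fin (n j + 1)) (Fin (n l + 1)) ℤ)
    (v : ∀ l : Fin m, Fin (n l + 1) → ℤ) : Type :=
  EtaTotalC n P (etaCocycle n v)

instance (n : Fin m → ℕ) (P : ∀ l j : Fin m, l < j → Matrix (Fin (n j + 1)) (Fin (n l + 1)) ℤ)
    (v : ∀ l : Fin m, Fin (n l + 1) → ℤ) : TopologicalSpace (EtaTotal n P v) :=
  inferInstanceAs (TopologicalSpace (Quot _))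

/-- Bundle projection `η(v_1,…,v_m) → B_m^{quo}`. -/
def etaProj (n : Fin m → ℕ)
    (P : ∀ l j : Fin m, l < j → Matrix (Fin (n j + 1)) (Fin (n l + 1)) ℤ)
    (c : (∀ l, BorelT (n l + 1)) → ℂ) : EtaTotalC n P c → FBSpace n P :=
  Quot.lift (fun p => Quot.mk _ p.1) (fun _ _ ⟨b, hb, _⟩ => Quot.sound ⟨b, hb⟩)

/-- Fiberwise scalar multiplication on the total space of `η(v_1,…,v_m)`. -/
def etaSMul (n : Fin m → ℕ)
    (P : ∀ l j : Fin m, l < j → Matrix (Fin (n j + 1)) (Fin (n l + 1)) ℤ)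
    (c : (∀ l, BorelT (n l + 1)) → ℂ) (z : ℂ) : EtaTotalC n P c → EtaTotalC n P c :=
  Quot.map (fun p => (p.1, z * p.2))
    (fun p q ⟨b, hb, hw⟩ => ⟨b, hb, by dsimp only; rw [hw]; ring⟩)

/-- An isomorphism of (complex) line bundles presented by total spaces with
projections and fiberwise scalar multiplications: a homeomorphism of total spaces
commuting with the projections and with scalar multiplication. -/
structure LineBundleIso {B : Type} [TopologicalSpace B]
    (E F : Type) [TopologicalSpace E] [TopologicalSpace F]
    (pE : E → B) (pF : F → B) (sE : ℂ → E → E) (sF : ℂ → F → F) where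
  toHomeomorph : E ≃ₜ F
  map_proj : ∀ e, pF (toHomeomorph e) = pE e
  map_smul : ∀ z e, toHomeomorph (sE z e) = sF z (toHomeomorph e)

end
noncomputable section Statement2

variable {m : ℕ}

/-- The span of the first `k` columns of a matrix `A`. -/
def colSpan {d : ℕ} (A : Matrix (Fin d) (Fin d) ℂ) (k : ℕ) : Submodule ℂ (Fin d → ℂ) :=
  Submodule.span ℂ (A.transpose '' {i : Fin d | (i : ℕ) < k})

variable (n : Fin (m+1) → ℕ)
  (P : ∀ l j : Fin (m+1), l < j → Matrix (Fin (n j + 1)) (Fin (n l + 1)) ℤ)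
  (k : Fin (n (Fin.last m) + 1))

/-- Points of the total space of the tautological subquotient line bundle
`W_{j,k}/W_{j,k-1}` on `B_j^{quo}` (with `j = m+1` the last stage), before identification:
a representative `g ∈ ∏_{l≤j} GL(n_l+1)` (whose class is a point of `B_j^{quo}`, i.e. a
point of `B_{j-1}^{quo}` with a full flag `V_• ` in `η^{(j)}`, `V_k` being spanned by the
first `k` columns of `g_j` in the `g`-chart of the fiber of `η^{(j)}`), together with a
vector of `V_k` representing a class in `V_k/V_{k-1}`. -/
abbrev WQuotCarrier : Type :=
  {p : (∀ l : Fin (m+1), GLC (n l + 1)) × (Fin (n (Fin.last m) + 1) → ℂ) //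
    p.2 ∈ colSpan ((p.1 (Fin.last m) : Matrix _ _ ℂ)) ((k : ℕ) + 1)}

/-- The identification on `WQuotCarrier`: `(g, w) ∼ (Φ(g,b), w')` whenever the transport
`D(b)⁻¹ w` of `w` to the `Φ(g,b)`-chart (here `D(b) = Ψ_1^{(j)}(b_1)⋯Ψ_{j-1}^{(j)}(b_{j-1})`
is the twisting matrix) agrees with `w'` modulo `V_{k-1}`, i.e. modulo the span of the
first `k-1` columns of `Φ(g,b)_j`. -/
def WQuotRel (p q : WQuotCarrier n k) : Prop :=
  ∃ b : ∀ l : Fin (m+1), BorelT (n l + 1),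
    Phi n P p.1.1 b = q.1.1 ∧
    q.1.2 - ((twist n P b (Fin.last m))⁻¹).val.mulVec p.1.2 ∈
      colSpan ((q.1.1 (Fin.last m) : Matrix _ _ ℂ)) (k : ℕ)

/-- The total space of the tautological quotient line bundle `W_{j,k}/W_{j,k-1} → B_j^{quo}`. -/
def WQuotTotal : Type := Quot (WQuotRel n P k)

instance : TopologicalSpace (WQuotTotal n P k) := inferInstanceAs (TopologicalSpace (Quot _))

/-- Projection of `W_{j,k}/W_{j,k-1}` to `B_j^{quo}`. -/
def wQuotProj : WQuotTotal n P k → FBSpace n P :=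
  Quot.lift (fun p => Quot.mk _ p.1.1) (fun _ _ ⟨b, hb, _⟩ => Quot.sound ⟨b, hb⟩)

/-- Fiberwise scalar multiplication on `W_{j,k}/W_{j,k-1}`. -/
def wQuotSMul (z : ℂ) : WQuotTotal n P k → WQuotTotal n P k :=
  Quot.map (fun p => ⟨(p.1.1, z • p.1.2), Submodule.smul_mem _ z p.2⟩)
    (fun p q => fun ⟨b, hb, hw⟩ => ⟨b, hb, by
      show z • q.1.2 - ((twist n P b (Fin.last m))⁻¹).val.mulVec (z • p.1.2) ∈ _
      rw [Matrix.mulVec_smul, ← smul_sub]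
      exact Submodule.smul_mem _ _ hw⟩)

/-- The integer vector `(0,…,0,e_k)`, where `e_k ∈ ℤ^{n_j+1}` has `1` in the `k`-th
place and all other entries zero. -/
def eVec : ∀ l : Fin (m+1), Fin (n l + 1) → ℤ :=
  fun l i => if (l : ℕ) = m ∧ (i : ℕ) = (k : ℕ) then 1 else 0


/-! ### Auxiliary lemmas for Statement 2 -/

section MyAuxLemmas
variable {d : ℕ}

lemma myMulVec_eq_sum_cols (A : Matrix (Fin d) (Fin d) ℂ) (c : Fin d → ℂ) :
    A.mulVec c = ∑ i, c i • A.transpose i := by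
  ext j
  simp [Matrix.mulVec, dotProduct, Finset.sum_apply, mul_comm]

lemma mulVec_mem_colSpan {t : ℕ} (A : Matrix (Fin d) (Fin d) ℂ) (c : Fin d → ℂ)
    (hc : ∀ i : Fin d, t ≤ (i : ℕ) → c i = 0) : A.mulVec c ∈ colSpan A t := by
  rw [myMulVec_eq_sum_cols]
  refine Submodule.sum_mem _ fun i _ => ?_
  by_cases h : (i : ℕ) < t
  · exact Submodule.smul_mem _ _ (Submodule.subset_span ⟨i, h, rfl⟩)
  · rw [hc i (not_lt.1 h), zero_smul]; exact Submodule.zero_mem _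

lemma inv_mulVec_mulVec (A : GLC d) (c : Fin d → ℂ) :
    (A⁻¹ : GLC d).val.mulVec (A.val.mulVec c) = c := by
  rw [Matrix.mulVec_mulVec, ← Units.val_mul, inv_mul_cancel, Units.val_one, Matrix.one_mulVec]

lemma col_eq_mulVec_single (A : Matrix (Fin d) (Fin d) ℂ) (x : Fin d) :
    A.transpose x = A.mulVec (Pi.single x 1) := by
  rw [Matrix.mulVec_single]; ext j; simp [Matrix.transpose_apply]

lemma mem_colSpan_iff (A : GLC d) {t : ℕ} (w : Fin d → ℂ) :
    w ∈ colSpan A.val t ↔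
      ∀ i : Fin d, t ≤ (i : ℕ) → ((A⁻¹ : GLC d).val.mulVec w) i = 0 := by
  constructor
  · intro hw
    induction hw using Submodule.span_induction with
    | mem x hx =>
        obtain ⟨x0, hx0, rfl⟩ := hx
        intro i hi
        rw [col_eq_mulVec_single, inv_mulVec_mulVec]
        exact Pi.single_eq_of_ne (fun h => by simp only [Set.mem_setOf_eq] at hx0; omega) 1
    | zero => intro i _; simp
    | add x y _ _ hx hy =>
        intro i hi
        rw [Matrix.mulVec_add, Pi.add_apply, hx i hi, hy i hi, add_zero]
    | smul a x _ hx =>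
        intro i hi
        rw [Matrix.mulVec_smul, Pi.smul_apply, hx i hi, smul_zero]
  · intro h
    have hw : w = A.val.mulVec ((A⁻¹ : GLC d).val.mulVec w) := by
      rw [Matrix.mulVec_mulVec, ← Units.val_mul, mul_inv_cancel, Units.val_one,
        Matrix.one_mulVec]
    rw [hw]
    exact mulVec_mem_colSpan _ _ h

lemma BorelT.inv_triangular (b : BorelT d) :
    Matrix.BlockTriangular ((b.1⁻¹ : GLC d) : Matrix (Fin d) (Fin d) ℂ) id := by
  rw [Matrix.coe_units_inv]
  haveI : Invertible (b.1 : Matrix (Fin d) (Fin d) ℂ) := b.1.invertible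
  exact Matrix.blockTriangular_inv_of_blockTriangular b.2

lemma BorelT.inv_diag (b : BorelT d) (i : Fin d) :
    ((b.1⁻¹ : GLC d) : Matrix (Fin d) (Fin d) ℂ) i i
      = (((b.1 : GLC d) : Matrix (Fin d) (Fin d) ℂ) i i)⁻¹ := by
  have h1 : ((b.1 : GLC d).val * (b.1⁻¹ : GLC d).val) i i = 1 := by
    rw [← Units.val_mul, mul_inv_cancel, Units.val_one, Matrix.one_apply_eq]
  rw [Matrix.mul_apply] at h1
  have h2 : ∑ j, b.1.val i j * (b.1⁻¹ : GLC d).val j i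
      = b.1.val i i * (b.1⁻¹ : GLC d).val i i := by
    refine Finset.sum_eq_single i (fun j _ hj => ?_) (fun h => absurd (Finset.mem_univ i) h)
    rcases lt_or_gt_of_ne hj with hlt | hgt
    · exact mul_eq_zero_of_left (b.2 (show (id j : Fin d) < id i from hlt)) _
    · exact mul_eq_zero_of_right _ (b.inv_triangular (show (id i : Fin d) < id j from hgt))
  rw [h2] at h1
  exact eq_inv_of_mul_eq_one_right h1

lemma BorelT.inv_mulVec_eq_zero (b : BorelT d) (a : Fin d → ℂ) (kk : Fin d)
    (ha : ∀ i : Fin d, (kk : ℕ) < (i : ℕ) → a i = 0) :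
    ∀ i : Fin d, (kk : ℕ) < (i : ℕ) → ((b.1⁻¹ : GLC d).val.mulVec a) i = 0 := by
  intro i hi
  rw [Matrix.mulVec, dotProduct]
  refine Finset.sum_eq_zero fun j _ => ?_
  rcases lt_or_ge (j : ℕ) (i : ℕ) with h | h
  · exact mul_eq_zero_of_left
      (b.inv_triangular (show (id j : Fin d) < id i from Fin.lt_def.2 h)) _
  · exact mul_eq_zero_of_right _ (ha j (lt_of_lt_of_le hi h))

lemma BorelT.inv_mulVec_apply_eq (b : BorelT d) (a : Fin d → ℂ) (kk : Fin d)
    (ha : ∀ i : Fin d, (kk : ℕ) < (i : ℕ) → a i = 0) :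
    ((b.1⁻¹ : GLC d).val.mulVec a) kk
      = (((b.1 : GLC d) : Matrix (Fin d) (Fin d) ℂ) kk kk)⁻¹ * a kk := by
  rw [Matrix.mulVec, dotProduct]
  rw [Finset.sum_eq_single kk (fun j _ hj => ?_) (fun h => absurd (Finset.mem_univ kk) h)]
  · rw [b.inv_diag]
  · rcases lt_or_gt_of_ne hj with hlt | hgt
    · exact mul_eq_zero_of_left (b.inv_triangular (show (id j : Fin d) < id kk from hlt)) _
    · exact mul_eq_zero_of_right _ (ha j hgt)

/-- Key computation for well-definedness of the forward map. -/
lemma key_fwd (T g g' : GLC d) (β : BorelT d) (kk : Fin d)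
    (hg' : g' = T⁻¹ * g * β.1) (w w' : Fin d → ℂ)
    (hw : w' - (T⁻¹ : GLC d).val.mulVec w ∈ colSpan g'.val (kk : ℕ))
    (hp : w ∈ colSpan g.val ((kk : ℕ) + 1)) :
    ((g'⁻¹ : GLC d).val.mulVec w') kk
      = ((β.1.val : Matrix (Fin d) (Fin d) ℂ) kk kk)⁻¹
        * (((g⁻¹ : GLC d).val.mulVec w) kk) := by
  have h1 : ((g'⁻¹ : GLC d).val.mulVec w') kk
      = ((g'⁻¹ : GLC d).val.mulVec ((T⁻¹ : GLC d).val.mulVec w)) kk := by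
    have h0 := (mem_colSpan_iff g' _).1 hw kk le_rfl
    rw [Matrix.mulVec_sub, Pi.sub_apply, sub_eq_zero] at h0
    exact h0
  have h2 : (g'⁻¹ : GLC d) * T⁻¹ = β.1⁻¹ * g⁻¹ := by rw [hg']; group
  have h3 : (g'⁻¹ : GLC d).val.mulVec ((T⁻¹ : GLC d).val.mulVec w)
      = (β.1⁻¹ : GLC d).val.mulVec ((g⁻¹ : GLC d).val.mulVec w) := by
    rw [Matrix.mulVec_mulVec, Matrix.mulVec_mulVec, ← Units.val_mul, ← Units.val_mul, h2]
  have ha0 : ∀ i : Fin d, (kk : ℕ) < (i : ℕ) → ((g⁻¹ : GLC d).val.mulVec w) i = 0 :=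
    fun i hi => (mem_colSpan_iff g _).1 hp i hi
  rw [h1, h3]
  exact BorelT.inv_mulVec_apply_eq β _ kk ha0

/-- Key computation for well-definedness of the backward map. -/
lemma key_bwd (T g g' : GLC d) (β : BorelT d) (kk : Fin d)
    (hg' : g' = T⁻¹ * g * β.1) (z z' : ℂ)
    (hz : z' = ((β.1.val : Matrix (Fin d) (Fin d) ℂ) kk kk)⁻¹ * z) :
    (fun i => z' * g'.val i kk) - (T⁻¹ : GLC d).val.mulVec (fun i => z * g.val i kk)
      ∈ colSpan g'.val (kk : ℕ) := by
  have e1 : (fun i => z * g.val i kk) = g.val.mulVec (Pi.single kk z) := by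
    rw [Matrix.mulVec_single]; ext i; simp [mul_comm]
  have e2 : (fun i => z' * g'.val i kk) = g'.val.mulVec (Pi.single kk z') := by
    rw [Matrix.mulVec_single]; ext i; simp [mul_comm]
  have e3 : (T⁻¹ : GLC d) * g = g' * (β.1)⁻¹ := by rw [hg']; group
  rw [e1, e2, Matrix.mulVec_mulVec, ← Units.val_mul, e3, Units.val_mul,
    ← Matrix.mulVec_mulVec, ← Matrix.mulVec_sub]
  refine mulVec_mem_colSpan _ _ ?_
  intro i hi
  have hsingle : ∀ j : Fin d, (kk : ℕ) < (j : ℕ) → Pi.single (M := fun _ : Fin d => ℂ) kk z j = 0 := by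
    intro j hj
    exact Pi.single_eq_of_ne (M := fun _ : Fin d => ℂ) (ne_of_gt (Fin.lt_def.2 hj)) z
  rcases eq_or_lt_of_le hi with heq | hlt
  · have hik : i = kk := Fin.ext heq.symm
    subst hik
    rw [Pi.sub_apply, Pi.single_eq_same, BorelT.inv_mulVec_apply_eq β _ i hsingle,
      Pi.single_eq_same, hz, sub_self]
  · rw [Pi.sub_apply, Pi.single_eq_of_ne (ne_of_gt (Fin.lt_def.2 hlt)),
      BorelT.inv_mulVec_eq_zero β _ kk hsingle i hlt, sub_zero]

/-- Key computation for the left inverse. -/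
lemma key_left (g : GLC d) (kk : Fin d) (w : Fin d → ℂ)
    (hp : w ∈ colSpan g.val ((kk : ℕ) + 1)) :
    (fun i => (((g⁻¹ : GLC d).val.mulVec w) kk) * g.val i kk) - w
      ∈ colSpan g.val (kk : ℕ) := by
  have e1 : (fun i => (((g⁻¹ : GLC d).val.mulVec w) kk) * g.val i kk)
      = g.val.mulVec (Pi.single kk (((g⁻¹ : GLC d).val.mulVec w) kk)) := by
    rw [Matrix.mulVec_single]; ext i; simp [mul_comm]
  have e2 : w = g.val.mulVec ((g⁻¹ : GLC d).val.mulVec w) := by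
    rw [Matrix.mulVec_mulVec, ← Units.val_mul, mul_inv_cancel, Units.val_one,
      Matrix.one_mulVec]
  have e3 : (fun i => (((g⁻¹ : GLC d).val.mulVec w) kk) * g.val i kk) - w
      = g.val.mulVec (Pi.single kk (((g⁻¹ : GLC d).val.mulVec w) kk)
          - (g⁻¹ : GLC d).val.mulVec w) := by
    rw [Matrix.mulVec_sub, ← e1, ← e2]
  rw [e3]
  refine mulVec_mem_colSpan _ _ ?_
  intro i hi
  rcases eq_or_lt_of_le hi with heq | hlt
  · have hik : i = kk := Fin.ext heq.symm
    subst hik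
    rw [Pi.sub_apply, Pi.single_eq_same, sub_self]
  · rw [Pi.sub_apply, Pi.single_eq_of_ne (ne_of_gt (Fin.lt_def.2 hlt)),
      (mem_colSpan_iff g _).1 hp i hlt, sub_zero]

end MyAuxLemmas

/-! ### Construction of the isomorphism -/

/-- Forward map on representatives. -/
def fwd0 (p : WQuotCarrier n k) : (∀ l : Fin (m+1), GLC (n l + 1)) × ℂ :=
  (p.1.1, (((p.1.1 (Fin.last m))⁻¹ : GLC _).val.mulVec p.1.2) k)

/-- Backward map on representatives. -/
def bwd0 (q : (∀ l : Fin (m+1), GLC (n l + 1)) × ℂ) : WQuotCarrier n k :=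
  ⟨(q.1, fun i => q.2 * (q.1 (Fin.last m)).val i k), by
    have he : (fun i => q.2 * (q.1 (Fin.last m)).val i k)
        = q.2 • (q.1 (Fin.last m)).val.transpose k := by
      ext i; simp [Matrix.transpose_apply, smul_eq_mul]
    rw [he]
    exact Submodule.smul_mem _ _
      (Submodule.subset_span ⟨k, Nat.lt_succ_self _, rfl⟩)⟩

/-- The identity element of the product of Borel subgroups. -/
def oneB : ∀ l : Fin (m+1), BorelT (n l + 1) :=
  fun l => ⟨1, by
    unfold IsUpper
    rw [Units.val_one]
    exact Matrix.blockTriangular_one⟩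

lemma charPow_oneB (l : Fin (m+1)) (a : Fin (n l + 1) → ℤ) : charPow (oneB n l) a = 1 := by
  refine Finset.prod_eq_one fun i _ => ?_
  show ((1 : GLC (n l + 1)) : Matrix _ _ ℂ) i i ^ a i = 1
  rw [Units.val_one, Matrix.one_apply_eq, one_zpow]

lemma twist_oneB (j : Fin (m+1)) : twist n P (oneB n) j = 1 := by
  apply Units.ext
  rw [Units.val_one]
  have hval : (twist n P (oneB n) j).val = Matrix.diagonal
      (fun kk => ∏ l : {l : Fin (m+1) // l < j},
        charPow (oneB n l.1) (fun i => P l.1 j l.2 kk i)) := rfl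
  rw [hval]
  have h1 : (fun kk => ∏ l : {l : Fin (m+1) // l < j},
      charPow (oneB n l.1) (fun i => P l.1 j l.2 kk i)) = fun _ => (1 : ℂ) :=
    funext fun kk => Finset.prod_eq_one fun l _ => charPow_oneB n l.1 _
  rw [h1, Matrix.diagonal_one]

lemma Phi_oneB (g : ∀ l : Fin (m+1), GLC (n l + 1)) : Phi n P g (oneB n) = g := by
  funext j
  show (twist n P (oneB n) j)⁻¹ * g j * ((1 : GLC (n j + 1))) = g j
  rw [twist_oneB, inv_one, one_mul, mul_one]

lemma etaCocycle_eVec (b : ∀ l : Fin (m+1), BorelT (n l + 1)) :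
    etaCocycle n (eVec n k) b
      = ((((b (Fin.last m)).1 : GLC _) : Matrix _ _ ℂ) k k)⁻¹ := by
  refine (Finset.prod_eq_single_of_mem (Fin.last m) (Finset.mem_univ _) ?_).trans ?_
  · intro l _ hl
    refine Finset.prod_eq_one fun i _ => ?_
    have h0 : eVec n k l i = 0 := by
      simp only [eVec]
      rw [if_neg]
      rintro ⟨h, -⟩
      exact hl (Fin.ext (by simpa using h))
    simp only [h0, neg_zero, zpow_zero]
  · refine (Finset.prod_eq_single_of_mem k (Finset.mem_univ _) ?_).trans ?_
    · intro i _ hik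
      have h0 : eVec n k (Fin.last m) i = 0 := by
        simp only [eVec]
        rw [if_neg]
        rintro ⟨-, h⟩
        exact hik (Fin.ext h)
      simp only [h0, neg_zero, zpow_zero]
    · have h3 : eVec n k (Fin.last m) k = 1 := by simp [eVec]
      simp only [h3]
      norm_num

lemma fwd_compat (p q : WQuotCarrier n k) (h : WQuotRel n P k p q) :
    ∃ b, Phi n P (fwd0 n k p).1 b = (fwd0 n k q).1 ∧
      (fwd0 n k q).2 = etaCocycle n (eVec n k) b * (fwd0 n k p).2 := by
  obtain ⟨b, hb, hw⟩ := h
  refine ⟨b, hb, ?_⟩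
  rw [etaCocycle_eVec]
  exact key_fwd (twist n P b (Fin.last m)) (p.1.1 (Fin.last m)) (q.1.1 (Fin.last m))
    (b (Fin.last m)) k (congrFun hb (Fin.last m)).symm p.1.2 q.1.2 hw p.2

lemma bwd_compat (p q : (∀ l : Fin (m+1), GLC (n l + 1)) × ℂ)
    (h : ∃ b, Phi n P p.1 b = q.1 ∧ q.2 = etaCocycle n (eVec n k) b * p.2) :
    WQuotRel n P k (bwd0 n k p) (bwd0 n k q) := by
  obtain ⟨b, hb, hz⟩ := h
  refine ⟨b, hb, ?_⟩
  exact key_bwd (twist n P b (Fin.last m)) (p.1 (Fin.last m)) (q.1 (Fin.last m))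
    (b (Fin.last m)) k (congrFun hb (Fin.last m)).symm p.2 q.2
    (by rw [hz, etaCocycle_eVec])

lemma rel_bwd_fwd (p : WQuotCarrier n k) : WQuotRel n P k p (bwd0 n k (fwd0 n k p)) := by
  refine ⟨oneB n, Phi_oneB n P _, ?_⟩
  rw [twist_oneB, inv_one, Units.val_one, Matrix.one_mulVec]
  exact key_left (p.1.1 (Fin.last m)) k p.1.2 p.2

lemma fwd_bwd (q : (∀ l : Fin (m+1), GLC (n l + 1)) × ℂ) : fwd0 n k (bwd0 n k q) = q := by
  refine Prod.ext rfl ?_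
  show (((q.1 (Fin.last m))⁻¹ : GLC _).val.mulVec
      (fun i => q.2 * (q.1 (Fin.last m)).val i k)) k = q.2
  have e1 : (fun i => q.2 * (q.1 (Fin.last m)).val i k)
      = (q.1 (Fin.last m)).val.mulVec (Pi.single k q.2) := by
    rw [Matrix.mulVec_single]; ext i; simp [mul_comm]
  rw [e1, inv_mulVec_mulVec, Pi.single_eq_same]

/-- The forward map on quotients. -/
def fwdF : WQuotTotal n P k → EtaTotal n P (eVec n k) :=
  Quot.lift (fun p => Quot.mk _ (fwd0 n k p))
    (fun p q h => Quot.sound (fwd_compat n P k p q h))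

/-- The backward map on quotients. -/
def bwdF : EtaTotal n P (eVec n k) → WQuotTotal n P k :=
  Quot.lift (fun q => Quot.mk _ (bwd0 n k q))
    (fun p q h => Quot.sound (bwd_compat n P k p q h))

lemma bwdF_fwdF (x : WQuotTotal n P k) : bwdF n P k (fwdF n P k x) = x := by
  induction x using Quot.ind with
  | _ p =>
    show Quot.mk (WQuotRel n P k) (bwd0 n k (fwd0 n k p)) = Quot.mk (WQuotRel n P k) p
    exact (Quot.sound (rel_bwd_fwd n P k p)).symm

lemma fwdF_bwdF (x : EtaTotal n P (eVec n k)) : fwdF n P k (bwdF n P k x) = x := by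
  induction x using Quot.ind with
  | _ q =>
    show Quot.mk _ (fwd0 n k (bwd0 n k q)) = Quot.mk _ q
    exact congrArg (Quot.mk _) (fwd_bwd n k q)

lemma continuous_fwd0 : Continuous (fwd0 n k) := by
  refine Continuous.prodMk (continuous_fst.comp continuous_subtype_val) ?_
  have hA : Continuous fun p : WQuotCarrier n k =>
      (((p.1.1 (Fin.last m))⁻¹ : GLC _) : Matrix (Fin (n (Fin.last m) + 1)) (Fin (n (Fin.last m) + 1)) ℂ) :=
    Units.continuous_coe_inv.comp
      ((continuous_apply (Fin.last m)).comp (continuous_fst.comp continuous_subtype_val))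
  have hv : Continuous fun p : WQuotCarrier n k => p.1.2 :=
    continuous_snd.comp continuous_subtype_val
  have he : (fun p : WQuotCarrier n k =>
        ((((p.1.1 (Fin.last m))⁻¹ : GLC _)).val.mulVec p.1.2) k)
      = fun p => ∑ j, ((((p.1.1 (Fin.last m))⁻¹ : GLC _)).val k j) * p.1.2 j := rfl
  show Continuous fun p : WQuotCarrier n k =>
    ((((p.1.1 (Fin.last m))⁻¹ : GLC _)).val.mulVec p.1.2) k
  rw [he]
  exact continuous_finset_sum _ fun j _ =>
    ((hA.matrix_elem k j).mul ((continuous_apply j).comp hv))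

lemma continuous_bwd0 : Continuous (bwd0 n k) := by
  refine Continuous.subtype_mk (Continuous.prodMk continuous_fst (continuous_pi fun i => ?_)) _
  have hA : Continuous fun q : (∀ l : Fin (m+1), GLC (n l + 1)) × ℂ =>
      ((q.1 (Fin.last m)) : Matrix (Fin (n (Fin.last m) + 1)) (Fin (n (Fin.last m) + 1)) ℂ) :=
    Units.continuous_val.comp ((continuous_apply (Fin.last m)).comp continuous_fst)
  exact continuous_snd.mul (hA.matrix_elem i k)

/-- Lemma 2.8: `W_{j,k}/W_{j,k-1} ≅ η(0,…,0,e_k)`.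
Let `B_•^{quo} = B_•^{quo}(𝔓)` be the flag Bott tower determined by the integer matrices
`𝔓` (here with `j = m+1` stages).  For each `1 ≤ k ≤ n_j+1`, the tautological quotient
line bundle `W_{j,k}/W_{j,k-1} → B_j^{quo}` is isomorphic, as a line bundle over
`B_j^{quo}`, to the line bundle `η(0,…,0,e_k) → B_j^{quo}`. -/
theorem wQuot_iso_eta (hn : ∀ l, 0 < n l) :
    Nonempty (LineBundleIso (WQuotTotal n P k) (EtaTotal n P (eVec n k))
      (wQuotProj n P k) (etaProj n P (etaCocycle n (eVec n k)))
      (wQuotSMul n P k) (etaSMul n P (etaCocycle n (eVec n k)))) := by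
  refine ⟨⟨⟨⟨fwdF n P k, bwdF n P k, bwdF_fwdF n P k, fwdF_bwdF n P k⟩, ?_, ?_⟩, ?_, ?_⟩⟩
  · exact continuous_quot_lift _ (continuous_quot_mk.comp (continuous_fwd0 n k))
  · exact continuous_quot_lift _ (continuous_quot_mk.comp (continuous_bwd0 n k))
  · intro e
    induction e using Quot.ind with
    | _ p => rfl
  · intro z e
    induction e using Quot.ind with
    | _ p => ?_
    refine congrArg (Quot.mk _) ?_
    refine Prod.ext rfl ?_
    show ((((p.1.1 (Fin.last m))⁻¹ : GLC _)).val.mulVec (z • p.1.2)) k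
        = z * ((((p.1.1 (Fin.last m))⁻¹ : GLC _)).val.mulVec p.1.2) k
    rw [Matrix.mulVec_smul, Pi.smul_apply, smul_eq_mul]

end Statement2
end
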